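/- Let R be a commutative ring, M an R-module, and x_1, …, x_n ∈ M; set x_0 = −(x_1 + ⋯ + x_n). Let t_1, …, t_n ∈ R and t_0 = 1 − (t_1 + ⋯ + t_n). Then in the exterior algebra of M over R: Σ_{j=0}^n (−1)^j t_j · (x_0 ∧ ⋯ ∧ x_{j−1} ∧ x_{j+1} ∧ ⋯ ∧ x_n) = x_1 ∧ ⋯ ∧ x_n (each wedge product taken over all indices 0,…,n except j, in increasing order). -/

import Mathlib

/-!
Expanding `x₀ = -(x₁ + ⋯ + xₙ)` multilinearly, the wedge with `xⱼ` omitted (`j ≥ 1`) keeps only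
the summand `-xⱼ`, and moving `xⱼ` back to its place costs the sign `(-1)^(j-1)`; so the `j`-th
term is `tⱼ · x₁ ∧ ⋯ ∧ xₙ`. The `j = 0` term is `t₀ · x₁ ∧ ⋯ ∧ xₙ`, and `t₀ + t₁ + ⋯ + tₙ = 1`.
-/

open ExteriorAlgebra

theorem List.eraseIdx_ofFn {α : Type*} {n : ℕ} (f : Fin (n + 1) → α) (i : Fin (n + 1)) :
    (List.ofFn f).eraseIdx i = List.ofFn (i.removeNth f) := by
  refine List.ext_getElem (by simp [List.length_eraseIdx, Nat.lt_succ_iff.mp i.isLt])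
    fun j _ _ => ?_
  simp only [List.getElem_eraseIdx, List.getElem_ofFn, Fin.removeNth_apply, Fin.succAbove,
    Fin.lt_def, Fin.val_castSucc]
  split_ifs <;> rfl

theorem Fin.removeNth_succ_cons {α : Type*} {n : ℕ} (a : α) (x : Fin (n + 1) → α)
    (i : Fin (n + 1)) :
    i.succ.removeNth (Fin.cons a x : Fin (n + 2) → α) = Fin.cons a (i.removeNth x) := by
  ext j
  cases j using Fin.cases <;> simp [Fin.removeNth_apply, Fin.succ_succAbove_succ]

namespace AlternatingMap

variable {R M N : Type*} [Ring R] [AddCommGroup M] [Module R M] [AddCommGroup N] [Module R N]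
  {n : ℕ}

theorem map_cons_removeNth (f : M [⋀^Fin (n + 1)]→ₗ[R] N) (x : Fin (n + 1) → M)
    (i : Fin (n + 1)) : f (Fin.cons (x i) (i.removeNth x)) = (-1 : R) ^ (i : ℕ) • f x := by
  rw [Fin.cons_removeNth_eq_comp_cycleRange_symm, f.map_perm, Equiv.Perm.sign_symm,
    Fin.sign_cycleRange, Units.smul_def, ← Int.cast_smul_eq_zsmul R]
  push_cast
  rfl

theorem map_cons_removeNth_of_ne (f : M [⋀^Fin (n + 1)]→ₗ[R] N) (x : Fin (n + 1) → M)
    {i k : Fin (n + 1)} (hki : k ≠ i) : f (Fin.cons (x k) (i.removeNth x)) = 0 := by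
  obtain ⟨k, rfl⟩ := Fin.exists_succAbove_eq hki
  exact f.map_eq_zero_of_eq _ (i := 0) (j := k.succ) (by simp [Fin.removeNth_apply])
    (Fin.succ_ne_zero k).symm

theorem map_cons_neg_sum_removeNth (f : M [⋀^Fin (n + 1)]→ₗ[R] N) (x : Fin (n + 1) → M)
    (i : Fin (n + 1)) :
    f (Fin.cons (-∑ k, x k) (i.removeNth x)) = -((-1 : R) ^ (i : ℕ) • f x) := by
  calc f (Fin.cons (-∑ k, x k) (i.removeNth x))
      = -∑ k, f (Fin.cons (x k) (i.removeNth x)) := by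
        have cons_eq_update (a : M) : (Fin.cons a (i.removeNth x) : Fin (n + 1) → M) =
            Function.update (Fin.cons 0 (i.removeNth x)) 0 a :=
          (Fin.update_cons_zero ..).symm
        rw [cons_eq_update, f.map_update_neg, f.map_update_sum]
        simp only [Fin.update_cons_zero]
    _ = -((-1 : R) ^ (i : ℕ) • f x) := by
        rw [Finset.sum_eq_single i (fun k _ => f.map_cons_removeNth_of_ne x)
          (by simp), map_cons_removeNth]

theorem sum_neg_one_pow_smul_map_removeNth_cons (f : M [⋀^Fin n]→ₗ[R] N)
    (x : Fin n → M) (t : Fin n → R) :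
    ∑ j : Fin (n + 1), ((-1 : R) ^ (j : ℕ) * (Fin.cons (1 - ∑ i, t i) t : Fin (n + 1) → R) j) •
      f (j.removeNth (Fin.cons (-∑ i, x i) x : Fin (n + 1) → M)) = f x := by
  have succ_term (i : Fin n) : ((-1 : R) ^ (i.succ : ℕ) * t i) •
      f (i.succ.removeNth (Fin.cons (-∑ i, x i) x : Fin (n + 1) → M)) = t i • f x := by
    cases n with
    | zero => exact i.elim0
    | succ m =>
      rw [Fin.removeNth_succ_cons, map_cons_neg_sum_removeNth, smul_neg, smul_smul, ← neg_smul,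
        Fin.val_succ]
      congr 1
      rw [((Commute.neg_one_left (t i)).pow_left _).eq, mul_assoc, ← pow_add,
        Odd.neg_one_pow ⟨i, by ring⟩, mul_neg_one, neg_neg]
  rw [Fin.sum_univ_succ]
  simp only [Fin.cons_zero, Fin.cons_succ, Fin.val_zero, pow_zero, one_mul, Fin.removeNth_zero,
    Fin.tail_cons, succ_term, ← Finset.sum_smul, ← add_smul, sub_add_cancel, one_smul]

end AlternatingMap

/-- **The top elementary form restricts to the volume form.**  Let `R` be a commutative
ring, `M` an `R`-module, `x_1, …, x_n ∈ M`, and set `x_0 = -(x_1 + ⋯ + x_n)`.  Let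
`t_1, …, t_n ∈ R` and `t_0 = 1 - (t_1 + ⋯ + t_n)`.  Then in the exterior algebra of `M`
over `R`:
`Σ_{j=0}^n (-1)^j t_j · (x_0 ∧ ⋯ ∧ x_{j-1} ∧ x_{j+1} ∧ ⋯ ∧ x_n) = x_1 ∧ ⋯ ∧ x_n`,
each wedge product being taken over all indices `0, …, n` except `j`, in increasing
order. -/
theorem top_elementary_form_identity (R : Type) [CommRing R] (M : Type) [AddCommGroup M]
    [Module R M] (n : ℕ) (x : Fin n → M) (t : Fin n → R) :
    ∑ j : Fin (n + 1),
        ((-1 : R) ^ (j : ℕ) * (Fin.cases (1 - ∑ i, t i) t j : R)) •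
          (((List.ofFn (Fin.cases (-∑ i, x i) x : Fin (n + 1) → M)).eraseIdx (j : ℕ)).map
              fun m => ExteriorAlgebra.ι R m).prod =
      ((List.ofFn x).map fun m => ExteriorAlgebra.ι R m).prod := by
  have prod_eq_ιMulti (v : Fin n → M) :
      ((List.ofFn v).map fun m => ι R m).prod = ιMulti R n v := by
    rw [List.map_ofFn, ιMulti_apply]
    rfl
  simp only [List.eraseIdx_ofFn, prod_eq_ιMulti]
  exact (ιMulti R n).sum_neg_one_pow_smul_map_removeNth_cons x t
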